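/- With K as defined by K = λ exp{[1 + C − Q^b[2] − (z² + μ)∑_j r_j]·∏_ℓ ρ(r_ℓ) − C} (where 0 < C < 7/9, λ > 1, b large so that Q^b[2] > 1 + C on L and Q^b[τ] ≥ 0): K(p) ≤ λe^{−C} for all points p outside some compact subset of ℝ^{2n+1}. -/

import Mathlib

/-!
Where some `r_j ≤ 1/3` the cutoff `∏ ρ(r_ℓ)` vanishes and `K = λe^{−C}`. Where all `r_j > 1/3`
the cutoff is nonnegative and `∑ r_j > 1/3`, so it suffices that the bracket
`1 + C − Q^b[2] − (z² + μ)∑ r_j` is nonpositive. That happens once `z² ≥ 3(1 + C)`, and once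
`Q^b[2] ≥ 1 + C`; the latter holds for `‖r‖` large because the quadratic form underlying
`Q^b[2]` is positive definite and depends continuously on `θ` in the compact torus, hence is
bounded below by `c‖v‖²` for a uniform `c > 0`.
-/

noncomputable section

/-- The `n`-torus `T^n`. -/
abbrev Torus (n : ℕ) : Type := Fin n → AddCircle (1 : ℝ)

/-- ℝ^{2n+1} in "polar" coordinates: points `(r, θ, z)` with `θ ∈ T^n`. -/
abbrev P (n : ℕ) : Type := (Fin n → ℝ) × Torus n × ℝ

/-- `Q^b[2](r,θ) = ∑ᵢ kᵢ(θ)(rᵢ − 2)² + b ∑_{p≠q}(r_p − r_q)²`. -/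
def Qb2 (n : ℕ) (k : Fin n → Torus n → ℝ) (b : ℝ)
    (r : Fin n → ℝ) (θ : Torus n) : ℝ :=
  ∑ i, k i θ * (r i - 2) ^ 2 +
    b * ∑ p, ∑ q, if p ≠ q then (r p - r q) ^ 2 else 0

/-- `K = λ exp{[1 + C − Q^b[2] − (z² + μ)∑ rⱼ]·∏ ρ(r_ℓ) − C}`. -/
def Kfun (n : ℕ) (k : Fin n → Torus n → ℝ) (μ : Torus n → ℝ)
    (ρ : ℝ → ℝ) (lam C b : ℝ) (p : P n) : ℝ :=
  lam * Real.exp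
    ((1 + C - Qb2 n k b p.1 p.2.1 - (p.2.2 ^ 2 + μ p.2.1) * ∑ j, p.1 j) *
      (∏ ℓ, ρ (p.1 ℓ)) - C)

open Set Metric Real Function

section Coercive

variable {X E : Type*} [TopologicalSpace X] [CompactSpace X]
  [NormedAddCommGroup E] [NormedSpace ℝ E] [FiniteDimensional ℝ E]
  (q : X → E → ℝ) (hq : Continuous (uncurry q))
  (hsmul : ∀ x (t : ℝ) v, q x (t • v) = t ^ 2 * q x v)
  (hpos : ∀ x v, v ≠ 0 → 0 < q x v)
include hq hsmul hpos

theorem exists_pos_mul_norm_sq_le :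
    ∃ c > 0, ∀ x v, c * ‖v‖ ^ 2 ≤ q x v := by
  have hS : IsCompact ((univ : Set X) ×ˢ sphere (0 : E) 1) :=
    isCompact_univ.prod (isCompact_sphere 0 1)
  obtain ⟨c, hc, hcS⟩ := hS.exists_forall_le' hq.continuousOn fun p hp =>
    hpos p.1 p.2 (ne_zero_of_mem_unit_sphere ⟨p.2, hp.2⟩)
  refine ⟨c, hc, fun x v => ?_⟩
  rcases eq_or_ne v 0 with rfl | hv
  · simpa using (hsmul x 0 0).symm.le
  have hv' : ‖v‖ ≠ 0 := norm_ne_zero_iff.mpr hv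
  have hu : (x, ‖v‖⁻¹ • v) ∈ (univ : Set X) ×ˢ sphere (0 : E) 1 :=
    ⟨mem_univ x, by simp [norm_smul, hv']⟩
  calc c * ‖v‖ ^ 2 ≤ ‖v‖ ^ 2 * q x (‖v‖⁻¹ • v) := by
        rw [mul_comm]; gcongr; exact hcS _ hu
    _ = q x v := by rw [← hsmul, smul_inv_smul₀ hv']

theorem exists_le_of_lt_norm (a : ℝ) :
    ∃ R, ∀ x v, R < ‖v‖ → a ≤ q x v := by
  obtain ⟨c, hc, hcq⟩ := exists_pos_mul_norm_sq_le q hq hsmul hpos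
  refine ⟨√(a / c), fun x v hv => ?_⟩
  have : a / c < ‖v‖ ^ 2 := (sqrt_lt' ((sqrt_nonneg _).trans_lt hv)).mp hv
  rw [div_lt_iff₀ hc] at this
  linarith [hcq x v]

end Coercive

section Qb

variable {ι X : Type*} [Fintype ι] [DecidableEq ι]

/-- The paper's `Q^b[0]`. -/
def Qb (k : ι → X → ℝ) (b : ℝ) (x : X) (v : ι → ℝ) : ℝ :=
  ∑ i, k i x * v i ^ 2 + b * ∑ p, ∑ q, if p ≠ q then (v p - v q) ^ 2 else 0

theorem Qb_smul (k : ι → X → ℝ) (b : ℝ) (x : X) (t : ℝ) (v : ι → ℝ) :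
    Qb k b x (t • v) = t ^ 2 * Qb k b x v := by
  simp only [Qb, Pi.smul_apply, smul_eq_mul, mul_add, Finset.mul_sum]
  congr 1
  · exact Finset.sum_congr rfl fun i _ => by ring
  · refine Finset.sum_congr rfl fun p _ => Finset.sum_congr rfl fun q _ => ?_
    split_ifs <;> ring

theorem continuous_Qb [TopologicalSpace X] {k : ι → X → ℝ} (hk : ∀ i, Continuous (k i))
    (b : ℝ) : Continuous (uncurry (Qb k b)) := by
  refine (continuous_finsetSum _ fun i _ => by fun_prop).add <| continuous_const.mul <|
    continuous_finsetSum _ fun p _ => continuous_finsetSum _ fun q _ => ?_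
  exact continuous_if_const _ (fun _ => by fun_prop) fun _ => continuous_const

end Qb

theorem Qb2_eq_Qb (n : ℕ) (k : Fin n → Torus n → ℝ) (b : ℝ) (r : Fin n → ℝ) (θ : Torus n) :
    Qb2 n k b r θ = Qb k b θ (r - 2) := by
  simp only [Qb2, Qb, Pi.sub_apply, Pi.ofNat_apply, sub_sub_sub_cancel_right]

theorem Qb2_nonneg {n : ℕ} {k : Fin n → Torus n → ℝ} {b : ℝ}
    (hpos : ∀ θ v, v ≠ 0 → 0 < Qb k b θ v) (r : Fin n → ℝ) (θ : Torus n) :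
    0 ≤ Qb2 n k b r θ := by
  rw [Qb2_eq_Qb]
  rcases eq_or_ne (r - 2) 0 with h | h
  · simpa [h] using (Qb_smul k b θ 0 0).ge
  · exact (hpos θ _ h).le

theorem exists_le_Qb2_of_lt_norm {n : ℕ} {k : Fin n → Torus n → ℝ} (hk : ∀ i, Continuous (k i))
    {b : ℝ} (hpos : ∀ θ v, v ≠ 0 → 0 < Qb k b θ v) (a : ℝ) :
    ∃ R, ∀ r θ, R < ‖r‖ → a ≤ Qb2 n k b r θ := by
  obtain ⟨R, hR⟩ := exists_le_of_lt_norm _ (continuous_Qb hk b) (Qb_smul k b) hpos a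
  refine ⟨R + 2, fun r θ hr => Qb2_eq_Qb n k b r θ ▸ hR θ _ ?_⟩
  have : ‖(2 : Fin n → ℝ)‖ ≤ 2 :=
    (pi_norm_const_le (2 : ℝ)).trans_eq (by norm_num)
  linarith [norm_sub_norm_le r 2]

/-- The paper's bracket `T`, so that `K = λ exp (T ∏ ρ(r_ℓ) − C)`. -/
def Kbracket (n : ℕ) (k : Fin n → Torus n → ℝ) (μ : Torus n → ℝ) (C b : ℝ) (p : P n) : ℝ :=
  1 + C - Qb2 n k b p.1 p.2.1 - (p.2.2 ^ 2 + μ p.2.1) * ∑ j, p.1 j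

theorem Kfun_le_of_Kbracket_nonpos {n : ℕ} {k : Fin n → Torus n → ℝ} {μ : Torus n → ℝ}
    {ρ : ℝ → ℝ} {lam C b : ℝ} (hlam : 0 ≤ lam) (hρ : ∀ t, 0 ≤ ρ t)
    (hρ0 : ∀ t ≤ 1 / 3, ρ t = 0) {p : P n}
    (hT : (∀ j, 1 / 3 < p.1 j) → Kbracket n k μ C b p ≤ 0) :
    Kfun n k μ ρ lam C b p ≤ lam * exp (-C) := by
  change lam * exp (Kbracket n k μ C b p * ∏ ℓ, ρ (p.1 ℓ) - C) ≤ _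
  gcongr
  suffices Kbracket n k μ C b p * ∏ ℓ, ρ (p.1 ℓ) ≤ 0 by linarith
  by_cases hall : ∀ j, 1 / 3 < p.1 j
  · exact mul_nonpos_of_nonpos_of_nonneg (hT hall) (Finset.prod_nonneg fun ℓ _ => hρ _)
  · obtain ⟨j, hj⟩ := not_forall.mp hall
    rw [Finset.prod_eq_zero (Finset.mem_univ j) (hρ0 _ (not_lt.mp hj)), mul_zero]

theorem Kbracket_nonpos {n : ℕ} {k : Fin n → Torus n → ℝ} {μ : Torus n → ℝ} {C b : ℝ}
    {p : P n} (hQ : 0 ≤ Qb2 n k b p.1 p.2.1) (hμ : 0 ≤ μ p.2.1) (hS : 1 / 3 ≤ ∑ j, p.1 j)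
    (h : 1 + C ≤ Qb2 n k b p.1 p.2.1 ∨ 3 * (1 + C) ≤ p.2.2 ^ 2) :
    Kbracket n k μ C b p ≤ 0 := by
  unfold Kbracket
  rcases h with h | h <;> nlinarith [sq_nonneg p.2.2]

theorem K_small_outside_compact_general (n : ℕ) (hn : 0 < n)
    (k : Fin n → Torus n → ℝ) (hk : ∀ i, Continuous (k i))
    (μ : Torus n → ℝ) (hμ0 : ∀ θ, 0 ≤ μ θ)
    (ρ : ℝ → ℝ)
    (hρ01 : ∀ t : ℝ, ρ t ∈ Set.Icc (0 : ℝ) 1)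
    (hρ0 : ∀ t : ℝ, ρ t = 0 ↔ t ≤ 1 / 3)
    (lam C b : ℝ) (hlam : 1 < lam)
    (hpos : ∀ θ : Torus n, ∀ v : Fin n → ℝ, v ≠ 0 →
      0 < ∑ i, k i θ * v i ^ 2 +
        b * ∑ p, ∑ q, if p ≠ q then (v p - v q) ^ 2 else 0) :
    ∃ W : Set (P n), IsCompact W ∧
      ∀ p ∉ W, Kfun n k μ ρ lam C b p ≤ lam * Real.exp (-C) := by
  obtain ⟨R, hR⟩ := exists_le_Qb2_of_lt_norm hk hpos (1 + C)
  refine ⟨closedBall 0 R ×ˢ univ ×ˢ closedBall 0 √(3 * (1 + C)),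
    (isCompact_closedBall _ _).prod (isCompact_univ.prod (isCompact_closedBall _ _)), ?_⟩
  rintro ⟨r, θ, z⟩ hp
  refine Kfun_le_of_Kbracket_nonpos (by linarith) (fun t => (hρ01 t).1) (fun t => (hρ0 t).2)
    fun hall => Kbracket_nonpos (Qb2_nonneg hpos r θ) (hμ0 θ) ?_ ?_
  · exact (hall ⟨0, hn⟩).le.trans
      (Finset.single_le_sum (fun j _ => (hall j).le.trans' (by norm_num)) (Finset.mem_univ _))
  · simp only [mem_prod, mem_closedBall, dist_zero_right, mem_univ, true_and, not_and_or,
      not_le, norm_eq_abs] at hp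
    refine hp.imp (hR r θ) fun hz => ?_
    rw [← sq_abs]
    exact ((sqrt_lt' ((sqrt_nonneg _).trans_lt hz)).mp hz).le

/-- `K ≤ λe^{−C}` outside some compact subset of ℝ^{2n+1}. -/
theorem K_small_outside_compact (n : ℕ) (hn : 0 < n)
    (k : Fin n → Torus n → ℝ) (hk : ∀ i, Continuous (k i))
    (hsum : ∀ θ, ∑ i, k i θ = 1)
    (μ : Torus n → ℝ) (hμ : Continuous μ) (hμ0 : ∀ θ, 0 ≤ μ θ)
    (ρ : ℝ → ℝ) (hρ : Continuous ρ)
    (hρ01 : ∀ t : ℝ, ρ t ∈ Set.Icc (0 : ℝ) 1)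
    (hρ0 : ∀ t : ℝ, ρ t = 0 ↔ t ≤ 1 / 3)
    (hρ1 : ∀ t : ℝ, ρ t = 1 ↔ 2 / 3 ≤ t)
    (lam C b : ℝ) (hC0 : 0 < C) (hC : C < 7 / 9) (hlam : 1 < lam)
    (hpos : ∀ θ : Torus n, ∀ v : Fin n → ℝ, v ≠ 0 →
      0 < ∑ i, k i θ * v i ^ 2 +
        b * ∑ p, ∑ q, if p ≠ q then (v p - v q) ^ 2 else 0) :
    ∃ W : Set (P n), IsCompact W ∧
      ∀ p ∉ W, Kfun n k μ ρ lam C b p ≤ lam * Real.exp (-C) :=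
  K_small_outside_compact_general n hn k hk μ hμ0 ρ hρ01 hρ0 lam C b hlam hpos
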